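/- arXiv:2505.11226 — 3 statements merged into one kernel-verified Lean document; each statement's English description precedes it below -/
import Mathlib

section
/- Fix an integer n ≥ 1, a real number κ with 1 ≤ κ ≤ n, and constants c > 0, A ≥ 0, ε > 0. Suppose S ⊆ ℤⁿ satisfies #(S ∩ [−H,H]ⁿ) ≤ c·H^κ for every real H ≥ 1. Then there exists M₀ depending only on n, κ, ε such that for every real M ≥ M₀ there is a constant C, depending only on n, A, ε, c and M, such that for all real Y > 0: Σ_{u ∈ S} (∏_{i=1}^{n} (1 + |u_i|/Y)^{−M}) · (log(1+|u|))^A ≤ C · max{1, Y^{κ+ε}}, where |u| := max_{1≤i≤n} |u_i|. -/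
open Polynomial

noncomputable section

/-- The rational function field `ℚ(X₁,…,Xₙ)`. -/
abbrev RF (n : ℕ) := FractionRing (MvPolynomial (Fin n) ℚ)

/-- Base change a polynomial `F ∈ ℤ[Y,X₁,…,Xₙ]` (written as a polynomial in `Y`
with coefficients in `ℤ[X₁,…,Xₙ]`) to `ℚ[Y,X₁,…,Xₙ]`. -/
def toQ {n : ℕ} (F : Polynomial (MvPolynomial (Fin n) ℤ)) :
    Polynomial (MvPolynomial (Fin n) ℚ) :=
  F.map (MvPolynomial.map (Int.castRingHom ℚ))

/-- View a polynomial in `ℚ[X][Y]` as a polynomial in `ℚ(X)[Y]`. -/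
def toFracQ {n : ℕ} (F : Polynomial (MvPolynomial (Fin n) ℚ)) : Polynomial (RF n) :=
  F.map (algebraMap (MvPolynomial (Fin n) ℚ) (RF n))

/-- View a polynomial in `ℤ[X][Y]` as a polynomial in `ℚ(X)[Y]`. -/
def toFrac {n : ℕ} (F : Polynomial (MvPolynomial (Fin n) ℤ)) : Polynomial (RF n) :=
  toFracQ (toQ F)

/-- The degree of `F(Y,X)` in the variable `Xᵢ`. -/
def degX {n : ℕ} {R : Type*} [CommSemiring R]
    (F : Polynomial (MvPolynomial (Fin n) R)) (i : Fin n) : ℕ :=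
  F.support.sup fun k => (F.coeff k).degreeOf i

/-- The total degree of `F(Y,X₁,…,Xₙ)` as a polynomial in `n+1` variables. -/
def totalDeg {n : ℕ} {R : Type*} [CommSemiring R]
    (F : Polynomial (MvPolynomial (Fin n) R)) : ℕ :=
  F.support.sup fun k => k + (F.coeff k).totalDegree

/-- `‖g‖`: the maximum absolute value of a coefficient of `g ∈ ℤ[X₁,…,Xₙ]`. -/
def mvNorm {n : ℕ} (g : MvPolynomial (Fin n) ℤ) : ℕ :=
  g.support.sup fun m => (g.coeff m).natAbs

/-- `‖F‖`: the maximum absolute value of a coefficient of `F ∈ ℤ[Y,X₁,…,Xₙ]`. -/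
def polyNorm {n : ℕ} (F : Polynomial (MvPolynomial (Fin n) ℤ)) : ℕ :=
  F.support.sup fun k => mvNorm (F.coeff k)

/-- The counting function
`N(F,B) = #{x ∈ ℤⁿ ∩ [−B,B]ⁿ : ∃ y ∈ ℤ, F(y,x) = 0}`. -/
def NFB {n : ℕ} (F : Polynomial (MvPolynomial (Fin n) ℤ)) (B : ℝ) : ℕ :=
  Set.ncard {x : Fin n → ℤ | (∀ i, |(x i : ℝ)| ≤ B) ∧
    ∃ y : ℤ, Polynomial.eval y (F.map (MvPolynomial.eval x)) = 0}

/-- `F ∈ ℤ[Y,X₁,…,Xₙ]` is absolutely irreducible: irreducible over `ℚ̄`. -/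
def AbsIrred {n : ℕ} (F : Polynomial (MvPolynomial (Fin n) ℤ)) : Prop :=
  Irreducible (F.map (MvPolynomial.map (Int.castRingHom (AlgebraicClosure ℚ))))

/-- `G` has positive degree in `Y` and in each variable `Xᵢ`. -/
def AllPosDeg {n : ℕ} (G : Polynomial (MvPolynomial (Fin n) ℤ)) : Prop :=
  0 < G.natDegree ∧ ∀ i : Fin n, 0 < degX G i

/-- A field extension `M` of `ℚ(X₁,…,Xₙ)` is an `n`-genuine extension: every
`G ∈ ℤ[Y,X₁,…,Xₙ]` irreducible over `ℚ(X)` with `M ≅ ℚ(X)[Y]/(G)` has positive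
degree in each of `Y, X₁, …, Xₙ`. -/
def IsGenuineExt (n : ℕ) (M : Type*) [Field M] [Algebra (RF n) M] : Prop :=
  ∀ G : Polynomial (MvPolynomial (Fin n) ℤ), Irreducible (toFrac G) →
    Nonempty (AdjoinRoot (toFrac G) ≃ₐ[RF n] M) → AllPosDeg G

/-- A field extension `M` of `ℚ(X₁,…,Xₙ)` is strongly `n`-genuine: every
intermediate field strictly containing `ℚ(X)` is `n`-genuine. -/
def IsStronglyGenuineExt (n : ℕ) (M : Type*) [Field M] [Algebra (RF n) M] : Prop :=
  ∀ M' : IntermediateField (RF n) M, M' ≠ ⊥ → IsGenuineExt n M'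

/-- The extension `ℚ(X)[Y]/(Fq)` presented by `Fq ∈ ℚ[X][Y]` is `n`-genuine. -/
def GenuineExtOfQ {n : ℕ} (Fq : Polynomial (MvPolynomial (Fin n) ℚ)) : Prop :=
  ∀ G : Polynomial (MvPolynomial (Fin n) ℤ), Irreducible (toFrac G) →
    Nonempty (AdjoinRoot (toFrac G) ≃ₐ[RF n] AdjoinRoot (toFracQ Fq)) → AllPosDeg G

/-- The extension `ℚ(X)[Y]/(Fq)` presented by `Fq ∈ ℚ[X][Y]` is strongly
`n`-genuine: for any field `M` isomorphic over `ℚ(X)` to `ℚ(X)[Y]/(Fq)`, every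
intermediate field strictly containing `ℚ(X)` is `n`-genuine. -/
def StronglyGenuineExtOfQ {n : ℕ} (Fq : Polynomial (MvPolynomial (Fin n) ℚ)) : Prop :=
  ∀ (M : Type) [Field M] [Algebra (RF n) M],
    Nonempty (AdjoinRoot (toFracQ Fq) ≃ₐ[RF n] M) → IsStronglyGenuineExt n M

/-- An absolutely irreducible `F ∈ ℤ[Y,X₁,…,Xₙ]` is an `n`-genuine polynomial. -/
def IsGenuinePoly {n : ℕ} (F : Polynomial (MvPolynomial (Fin n) ℤ)) : Prop :=
  AbsIrred F ∧ GenuineExtOfQ (toQ F)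

/-- An absolutely irreducible `F ∈ ℤ[Y,X₁,…,Xₙ]` is a strongly `n`-genuine polynomial. -/
def IsStronglyGenuinePoly {n : ℕ} (F : Polynomial (MvPolynomial (Fin n) ℤ)) : Prop :=
  AbsIrred F ∧ StronglyGenuineExtOfQ (toQ F)

/-- The ring map `ℚ[X₁,…,Xₙ] → ℚ[X₁,…,Xₙ]` induced by the linear substitution
`Xᵢ ↦ Σⱼ σᵢⱼ Xⱼ`. -/
def lsubMv {n : ℕ} (σ : Matrix (Fin n) (Fin n) ℚ) :
    MvPolynomial (Fin n) ℚ →+* MvPolynomial (Fin n) ℚ :=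
  (MvPolynomial.aeval (R := ℚ)
    fun i => ∑ j, MvPolynomial.C (σ i j) * MvPolynomial.X j).toRingHom

/-- `F_σ(Y,X) := F(Y,σ(X))` for a linear change of variables `σ`. -/
def applyGL {n : ℕ} (σ : Matrix (Fin n) (Fin n) ℚ)
    (Fq : Polynomial (MvPolynomial (Fin n) ℚ)) : Polynomial (MvPolynomial (Fin n) ℚ) :=
  Fq.map (lsubMv σ)

/-- `F` is `(1,n)`-allowable: absolutely irreducible, monic in `Y`, and
`ℚ(X)[Y]/(F_σ)` is an `n`-genuine extension for every `σ ∈ GLₙ(ℚ)`. -/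
def IsAllowable {n : ℕ} (F : Polynomial (MvPolynomial (Fin n) ℤ)) : Prop :=
  AbsIrred F ∧ F.Monic ∧
    ∀ σ : Matrix (Fin n) (Fin n) ℚ, IsUnit σ.det → GenuineExtOfQ (applyGL σ (toQ F))

/-- `F` is strongly `(1,n)`-allowable: absolutely irreducible, monic in `Y`, and
`ℚ(X)[Y]/(F_σ)` is a strongly `n`-genuine extension for every `σ ∈ GLₙ(ℚ)`. -/
def IsStronglyAllowable {n : ℕ} (F : Polynomial (MvPolynomial (Fin n) ℤ)) : Prop :=
  AbsIrred F ∧ F.Monic ∧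
    ∀ σ : Matrix (Fin n) (Fin n) ℚ, IsUnit σ.det → StronglyGenuineExtOfQ (applyGL σ (toQ F))

/-- `F` has the form (1.2) with parameter `m`:
`F = Y^{md} + f₁(X) Y^{m(d-1)} + ⋯ + f_{d-1}(X) Y^m + f_d(X)` with `f_d ≠ 0`. -/
def HasForm (n m : ℕ) (F : Polynomial (MvPolynomial (Fin n) ℤ)) : Prop :=
  ∃ (d : ℕ) (f : ℕ → MvPolynomial (Fin n) ℤ), 1 ≤ d ∧ f d ≠ 0 ∧
    F = Polynomial.X ^ (m * d) +
      ∑ j ∈ Finset.Icc 1 d, Polynomial.C (f j) * Polynomial.X ^ (m * (d - j))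

/-- `P` has a linear factor in `Y`: `P = (Y − Q(X))·H̃(Y,X)`. -/
def HasLinearFactorY {n : ℕ} {R : Type*} [CommRing R]
    (P : Polynomial (MvPolynomial (Fin n) R)) : Prop :=
  ∃ (Q : MvPolynomial (Fin n) R) (H : Polynomial (MvPolynomial (Fin n) R)),
    P = (Polynomial.X - Polynomial.C Q) * H

/-- The canonical map `ℚ[X₁,…,Xₙ] → ℚ(X)[Y]/(F)`. -/
def structMap {n : ℕ} (F : Polynomial (MvPolynomial (Fin n) ℤ)) :
    MvPolynomial (Fin n) ℚ →+* AdjoinRoot (toFrac F) :=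
  (algebraMap (RF n) (AdjoinRoot (toFrac F))).comp
    (algebraMap (MvPolynomial (Fin n) ℚ) (RF n))

/-- `z ∈ ℚ(X)[Y]/(F)` lies in the subfield `ℚ((Xᵢ)_{i≠j})`: it can be written
as a quotient of two polynomials not involving `Xⱼ`. -/
def CoordMem {n : ℕ} (j : Fin n) (F : Polynomial (MvPolynomial (Fin n) ℤ))
    (z : AdjoinRoot (toFrac F)) : Prop :=
  ∃ a b : MvPolynomial (Fin n) ℚ,
    MvPolynomial.degreeOf j a = 0 ∧ MvPolynomial.degreeOf j b = 0 ∧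
    structMap F b ≠ 0 ∧ z * structMap F b = structMap F a

/-- `z ∈ ℚ(X)[Y]/(F)` is algebraic over the subfield `ℚ((Xᵢ)_{i≠j})`. -/
def AlgOverCoord {n : ℕ} (j : Fin n) (F : Polynomial (MvPolynomial (Fin n) ℤ))
    (z : AdjoinRoot (toFrac F)) : Prop :=
  ∃ P : Polynomial (AdjoinRoot (toFrac F)), P ≠ 0 ∧ (∀ k, CoordMem j F (P.coeff k)) ∧
    Polynomial.eval z P = 0

/-- Substitute `Xᵢ = xᵢ` for `i ∈ I` into `F`, over `ℚ̄`. -/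
def substSome {n : ℕ} (I : Finset (Fin n)) (x : Fin n → ℚ)
    (F : Polynomial (MvPolynomial (Fin n) ℤ)) :
    Polynomial (MvPolynomial (Fin n) (AlgebraicClosure ℚ)) :=
  (toQ F).map
    ((MvPolynomial.aeval (R := ℚ) fun i =>
      if i ∈ I then MvPolynomial.C (algebraMap ℚ (AlgebraicClosure ℚ) (x i))
      else MvPolynomial.X i).toRingHom)

/-- Substitute `Xᵢ = xᵢ` for all `i ≠ i₀` into `F`, over `ℚ̄`. -/
def substKeepFirst {n : ℕ} (i0 : Fin n) (x : {i : Fin n // i ≠ i0} → ℤ)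
    (F : Polynomial (MvPolynomial (Fin n) ℤ)) :
    Polynomial (MvPolynomial (Fin n) (AlgebraicClosure ℚ)) :=
  F.map
    ((MvPolynomial.aeval (R := ℤ) fun i =>
      if h : i = i0 then (MvPolynomial.X i : MvPolynomial (Fin n) (AlgebraicClosure ℚ))
      else MvPolynomial.C ((x ⟨i, h⟩ : ℤ) : AlgebraicClosure ℚ)).toRingHom)

/-- `‖L‖`: maximum absolute value of an entry of an integer matrix. -/
def matNorm {n : ℕ} (L : Matrix (Fin n) (Fin n) ℤ) : ℕ :=
  Finset.univ.sup fun p : Fin n × Fin n => (L p.1 p.2).natAbs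

/-- The standard additive character `e_p(a) = exp(2πi a/p)` on `ZMod p`. -/
def eZp (p : ℕ) (a : ZMod p) : ℂ :=
  Complex.exp (2 * Real.pi * Complex.I * (a.val : ℂ) / (p : ℂ))

/-!
Split `S` into dyadic shells `2ʲ ≤ 1 + |u| < 2ʲ⁺¹`. Shell `j` has at most `c·2^κ·2^{jκ}`
points; on it the logarithm is at most `j + 1` and, for `0 ≤ s ≤ M`, the product of the
weights is at most `(max 1 Y / 2ʲ)^s`, which uses only the coordinate realising `|u|`.
Taking `κ < s` the shell contributions decay like `(j+1)^⌈A⌉ · 2^{(κ-s)j}`, so the sum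
is `O(max 1 Y ^ s)`, and `s = max (κ + ε) 0` gives the claim.
-/

open Finset

lemma summable_succ_pow_mul_geometric (k : ℕ) {r : ℝ} (hr0 : 0 < r) (hr1 : r < 1) :
    Summable fun j : ℕ => ((j : ℝ) + 1) ^ k * r ^ j := by
  have h : Summable fun j : ℕ => ((j + 1 : ℕ) : ℝ) ^ k * r ^ (j + 1) :=
    (summable_nat_add_iff (f := fun j : ℕ => (j : ℝ) ^ k * r ^ j) 1).2
      (summable_pow_mul_geometric_of_norm_lt_one k (by rwa [Real.norm_eq_abs, abs_of_pos hr0]))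
  refine (h.mul_left r⁻¹).congr fun j => ?_
  simp only [Nat.cast_add, Nat.cast_one, pow_succ]
  field_simp

lemma sum_le_tsum_of_sum_fiber_le {α : Type*} {f : α → ℝ} (g : α → ℕ) {b : ℕ → ℝ}
    (hb : Summable b) (hb0 : 0 ≤ b)
    (h : ∀ (t : Finset α) (j : ℕ), ∑ u ∈ t with g u = j, f u ≤ b j)
    (t : Finset α) : ∑ u ∈ t, f u ≤ ∑' j, b j := by
  rw [← sum_fiberwise_of_maps_to (t := t.image g) fun u hu => mem_image_of_mem g hu]
  exact (sum_le_sum fun j _ => h t j).trans (hb.sum_le_tsum _ fun j _ => hb0 j)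

lemma one_add_div_rpow_neg_le {x Y D M s : ℝ} (hx : 0 ≤ x) (hY : 0 < Y) (hD : 0 < D)
    (hDx : D ≤ 1 + x) (hs : 0 ≤ s) (hsM : s ≤ M) :
    (1 + x / Y) ^ (-M) ≤ (max 1 Y / D) ^ s := by
  set V := max 1 Y
  have hV : 0 < V := lt_max_of_lt_left one_pos
  have hbase : D / V ≤ 1 + x / Y := by
    have hxV : x ≤ x / Y * V := by
      rw [div_mul_eq_mul_div, le_div_iff₀ hY]
      exact mul_le_mul_of_nonneg_left (le_max_right 1 Y) hx
    rw [div_le_iff₀ hV]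
    nlinarith [le_max_left 1 Y]
  rcases le_or_gt 1 (V / D) with h | h
  · calc (1 + x / Y) ^ (-M) ≤ 1 :=
          Real.rpow_le_one_of_one_le_of_nonpos (by simp; positivity) (by linarith)
      _ ≤ (V / D) ^ s := Real.one_le_rpow h hs
  · calc (1 + x / Y) ^ (-M) ≤ (D / V) ^ (-M) :=
          Real.rpow_le_rpow_of_nonpos (div_pos hD hV) hbase (by linarith)
      _ = (V / D) ^ M := by
          rw [Real.rpow_neg (div_pos hD hV).le, ← Real.inv_rpow (div_pos hD hV).le, inv_div]
      _ ≤ (V / D) ^ s := Real.rpow_le_rpow_of_exponent_ge (div_pos hV hD) h.le hsM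

lemma log_one_add_rpow_le {m j : ℕ} {A : ℝ} (hA : 0 ≤ A) (hm : 1 + m ≤ 2 ^ (j + 1)) :
    Real.log (1 + m) ^ A ≤ ((j : ℝ) + 1) ^ ⌈A⌉₊ := by
  have hlog : Real.log (1 + m) ≤ (j : ℝ) + 1 :=
    calc Real.log (1 + m) ≤ Real.log (2 ^ (j + 1)) :=
          Real.log_le_log (by positivity) (by exact_mod_cast hm)
      _ = ((j : ℝ) + 1) * Real.log 2 := by rw [Real.log_pow]; push_cast; ring
      _ ≤ (j : ℝ) + 1 := mul_le_of_le_one_right (by positivity)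
          (Real.log_two_lt_d9.le.trans (by norm_num))
  calc Real.log (1 + m) ^ A ≤ ((j : ℝ) + 1) ^ A :=
        Real.rpow_le_rpow (Real.log_nonneg (by simp)) hlog hA
    _ ≤ ((j : ℝ) + 1) ^ (⌈A⌉₊ : ℝ) :=
        Real.rpow_le_rpow_of_exponent_le (by simp) (Nat.le_ceil A)
    _ = ((j : ℝ) + 1) ^ ⌈A⌉₊ := Real.rpow_natCast _ _

lemma max_one_rpow_max_le (Y a : ℝ) : max 1 Y ^ max a 0 ≤ max 1 (Y ^ a) := by
  rcases le_total Y 1 with hY1 | hY1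
  · simp [max_eq_left hY1]
  · rw [max_eq_right hY1]
    rcases le_total a 0 with ha | ha
    · simp [max_eq_right ha]
    · rw [max_eq_left ha]
      exact le_max_right _ _

section Weight

variable {ι : Type*} [Fintype ι]

def supNatAbs (u : ι → ℤ) : ℕ :=
  univ.sup fun i => (u i).natAbs

def weight (Y M A : ℝ) (u : ι → ℤ) : ℝ :=
  (∏ i, (1 + |(u i : ℝ)| / Y) ^ (-M)) * Real.log (1 + (supNatAbs u : ℝ)) ^ A

def dyadicLevel (u : ι → ℤ) : ℕ :=
  Nat.log 2 (1 + supNatAbs u)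

lemma abs_le_supNatAbs (u : ι → ℤ) (i : ι) : |(u i : ℝ)| ≤ supNatAbs u := by
  rw [← Int.cast_abs, ← Nat.cast_natAbs]
  exact_mod_cast le_sup (f := fun i => (u i).natAbs) (mem_univ i)

lemma two_pow_dyadicLevel_le (u : ι → ℤ) : (2 : ℝ) ^ dyadicLevel u ≤ 1 + supNatAbs u :=
  mod_cast Nat.pow_log_le_self 2 (by omega)

lemma one_add_supNatAbs_le (u : ι → ℤ) : 1 + supNatAbs u ≤ 2 ^ (dyadicLevel u + 1) :=
  (Nat.lt_pow_succ_log_self one_lt_two _).le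

lemma weight_nonneg {Y : ℝ} (hY : 0 < Y) (M A : ℝ) (u : ι → ℤ) : 0 ≤ weight Y M A u :=
  mul_nonneg (prod_nonneg fun _ _ => Real.rpow_nonneg (by positivity) _)
    (Real.rpow_nonneg (Real.log_nonneg (by simp)) _)

lemma prod_rpow_neg_le {Y M : ℝ} (hY : 0 < Y) (hM : 0 ≤ M) (u : ι → ℤ) :
    ∏ i, (1 + |(u i : ℝ)| / Y) ^ (-M) ≤ (1 + supNatAbs u / Y) ^ (-M) := by
  have hfac : ∀ i, (1 + |(u i : ℝ)| / Y) ^ (-M) ≤ 1 := fun i =>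
    Real.rpow_le_one_of_one_le_of_nonpos (by simp; positivity) (by linarith)
  have hfac0 : ∀ i, 0 ≤ (1 + |(u i : ℝ)| / Y) ^ (-M) := fun i =>
    Real.rpow_nonneg (by positivity) _
  refine sup_induction (p := fun m : ℕ => _ ≤ (1 + (m : ℝ) / Y) ^ (-M)) ?_ ?_ ?_
  · simpa using prod_le_one (fun i _ => hfac0 i) fun i _ => hfac i
  · intro a ha b hb
    show _ ≤ (1 + ((max a b : ℕ) : ℝ) / Y) ^ (-M)
    rcases max_choice a b with h | h <;> rw [h] <;> assumption
  · intro i _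
    classical
    rw [← mul_prod_erase _ _ (mem_univ i), Nat.cast_natAbs, Int.cast_abs]
    exact mul_le_of_le_one_right (hfac0 i)
      (prod_le_one (fun j _ => hfac0 j) fun j _ => hfac j)

lemma weight_le_of_dyadicLevel_eq {Y M A s : ℝ} (hY : 0 < Y) (hA : 0 ≤ A) (hs : 0 ≤ s)
    (hsM : s ≤ M) {u : ι → ℤ} {j : ℕ} (hu : dyadicLevel u = j) :
    weight Y M A u ≤ (max 1 Y / 2 ^ j) ^ s * ((j : ℝ) + 1) ^ ⌈A⌉₊ := by
  subst hu
  refine mul_le_mul ((prod_rpow_neg_le hY (hs.trans hsM) u).trans ?_)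
    (log_one_add_rpow_le hA (one_add_supNatAbs_le u))
    (Real.rpow_nonneg (Real.log_nonneg (by simp)) _) (by positivity)
  exact one_add_div_rpow_neg_le (by positivity) hY (by positivity)
    (two_pow_dyadicLevel_le u) hs hsM

lemma finite_setOf_forall_abs_le (H : ℝ) : {x : ι → ℤ | ∀ i, |(x i : ℝ)| ≤ H}.Finite := by
  refine (Set.Finite.pi fun _ => Set.finite_Icc (-⌈H⌉) ⌈H⌉).subset fun x hx i _ => ?_
  have h : ((|x i| : ℤ) : ℝ) ≤ ⌈H⌉ := by
    rw [Int.cast_abs]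
    exact (hx i).trans (Int.le_ceil H)
  exact abs_le.mp (by exact_mod_cast h)

lemma card_le_ncard_of_forall_abs_le {S : Set (ι → ℤ)} (t : Finset S) {H : ℝ}
    (ht : ∀ u ∈ t, ∀ i, |((u : ι → ℤ) i : ℝ)| ≤ H) :
    #t ≤ {u ∈ S | ∀ i, |(u i : ℝ)| ≤ H}.ncard := by
  rw [← card_map (Function.Embedding.subtype _), ← Set.ncard_coe_finset]
  refine Set.ncard_le_ncard ?_ ((finite_setOf_forall_abs_le H).subset fun _ h => h.2)
  intro x hx
  obtain ⟨u, hu, rfl⟩ := mem_map.mp hx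
  exact ⟨u.2, ht u hu⟩

def HasBoxCountBound (S : Set (ι → ℤ)) (c κ : ℝ) : Prop :=
  ∀ H : ℝ, 1 ≤ H → ({u ∈ S | ∀ i, |(u i : ℝ)| ≤ H}.ncard : ℝ) ≤ c * H ^ κ

variable {S : Set (ι → ℤ)} {c κ : ℝ}

lemma card_dyadicLevel_le (hS : HasBoxCountBound S c κ)
    (t : Finset S) (j : ℕ) :
    (#(t.filter (fun u : S => dyadicLevel (u : ι → ℤ) = j)) : ℝ) ≤
      c * 2 ^ κ * ((2 : ℝ) ^ j) ^ κ := by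
  have hbox : ∀ u ∈ t.filter (fun u : S => dyadicLevel (u : ι → ℤ) = j),
      ∀ i, |((u : ι → ℤ) i : ℝ)| ≤ 2 * 2 ^ j := by
    intro u hu i
    rw [← (mem_filter.mp hu).2, ← pow_succ']
    refine (abs_le_supNatAbs _ i).trans ?_
    have := one_add_supNatAbs_le (u : ι → ℤ)
    exact_mod_cast (Nat.le_add_left _ 1).trans this
  calc (#(t.filter (fun u : S => dyadicLevel (u : ι → ℤ) = j)) : ℝ)
      ≤ {u ∈ S | ∀ i, |(u i : ℝ)| ≤ 2 * 2 ^ j}.ncard := by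
        exact_mod_cast card_le_ncard_of_forall_abs_le _ hbox
    _ ≤ c * (2 * 2 ^ j) ^ κ := hS _ (by linarith [one_le_pow₀ (M₀ := ℝ) one_le_two (n := j)])
    _ = c * 2 ^ κ * ((2 : ℝ) ^ j) ^ κ := by rw [Real.mul_rpow (by norm_num) (by positivity)]; ring

lemma sum_weight_dyadicLevel_le (hS : HasBoxCountBound S c κ)
    {Y M A s : ℝ} (hY : 0 < Y) (hA : 0 ≤ A) (hs : 0 ≤ s) (hsM : s ≤ M) (t : Finset S) (j : ℕ) :
    ∑ u ∈ t.filter (fun u : S => dyadicLevel (u : ι → ℤ) = j), weight Y M A (u : ι → ℤ) ≤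
      c * 2 ^ κ * max 1 Y ^ s * (((j : ℝ) + 1) ^ ⌈A⌉₊ * ((2 : ℝ) ^ (κ - s)) ^ j) := by
  have h2j : (0 : ℝ) < 2 ^ j := by positivity
  calc ∑ u ∈ t.filter (fun u : S => dyadicLevel (u : ι → ℤ) = j), weight Y M A (u : ι → ℤ)
      ≤ #(t.filter (fun u : S => dyadicLevel (u : ι → ℤ) = j)) •
          ((max 1 Y / 2 ^ j) ^ s * ((j : ℝ) + 1) ^ ⌈A⌉₊) :=
        sum_le_card_nsmul _ _ _ fun u hu =>
          weight_le_of_dyadicLevel_eq hY hA hs hsM (mem_filter.mp hu).2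
    _ ≤ c * 2 ^ κ * ((2 : ℝ) ^ j) ^ κ * ((max 1 Y / 2 ^ j) ^ s * ((j : ℝ) + 1) ^ ⌈A⌉₊) := by
        rw [nsmul_eq_mul]
        exact mul_le_mul_of_nonneg_right (card_dyadicLevel_le hS t j) (by positivity)
    _ = c * 2 ^ κ * max 1 Y ^ s * (((j : ℝ) + 1) ^ ⌈A⌉₊ * ((2 : ℝ) ^ (κ - s)) ^ j) := by
        have hshift : ((2 : ℝ) ^ (κ - s)) ^ j = ((2 : ℝ) ^ j) ^ κ / ((2 : ℝ) ^ j) ^ s := by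
          rw [← Real.rpow_sub h2j, ← Real.rpow_natCast_mul zero_le_two,
            ← Real.rpow_mul_natCast zero_le_two, mul_comm]
        have h2js : (0 : ℝ) < ((2 : ℝ) ^ j) ^ s := by positivity
        rw [hshift, Real.div_rpow (by positivity) h2j.le]
        field_simp

theorem summable_weight_and_tsum_le (hS : HasBoxCountBound S c κ)
    {Y M A s : ℝ} (hY : 0 < Y) (hA : 0 ≤ A) (hs : 0 ≤ s) (hsM : s ≤ M) (hκs : κ < s) :
    Summable (fun u : S => weight Y M A (u : ι → ℤ)) ∧
      ∑' u : S, weight Y M A (u : ι → ℤ) ≤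
        c * 2 ^ κ * max 1 Y ^ s * ∑' j : ℕ, ((j : ℝ) + 1) ^ ⌈A⌉₊ * ((2 : ℝ) ^ (κ - s)) ^ j := by
  have hgeom := summable_succ_pow_mul_geometric ⌈A⌉₊ (Real.rpow_pos_of_pos two_pos (κ - s))
    (Real.rpow_lt_one_of_one_lt_of_neg one_lt_two (sub_neg.mpr hκs))
  have hpart : ∀ t : Finset S, ∑ u ∈ t, weight Y M A (u : ι → ℤ) ≤
      c * 2 ^ κ * max 1 Y ^ s * ∑' j : ℕ, ((j : ℝ) + 1) ^ ⌈A⌉₊ * ((2 : ℝ) ^ (κ - s)) ^ j := by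
    have hc : 0 ≤ c := by simpa using (Nat.cast_nonneg _).trans (hS 1 le_rfl)
    intro t
    rw [← tsum_mul_left]
    exact sum_le_tsum_of_sum_fiber_le (fun u : S => dyadicLevel (u : ι → ℤ))
      (hgeom.mul_left _) (fun j => by positivity) (sum_weight_dyadicLevel_le hS hY hA hs hsM) t
  have hw : 0 ≤ fun u : S => weight Y M A (u : ι → ℤ) := fun u => weight_nonneg hY M A _
  exact ⟨summable_of_sum_le hw hpart, Real.tsum_le_of_sum_le hw hpart⟩

end Weight

theorem statement7_general (n : ℕ) (κ ε : ℝ) (hε : 0 < ε) :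
    ∃ M₀ : ℝ, ∀ M : ℝ, M₀ ≤ M → ∀ c A : ℝ, 0 < c → 0 ≤ A → ∃ C : ℝ, 0 < C ∧
      ∀ S : Set (Fin n → ℤ),
        (∀ H : ℝ, 1 ≤ H →
          (Set.ncard {u ∈ S | ∀ i, |(u i : ℝ)| ≤ H} : ℝ) ≤ c * H ^ κ) →
        ∀ Y : ℝ, 0 < Y →
          Summable (fun u : S =>
            (∏ i, (1 + |((u : Fin n → ℤ) i : ℝ)| / Y) ^ (-M)) *
              Real.log (1 + ((Finset.univ.sup fun i => ((u : Fin n → ℤ) i).natAbs : ℕ) : ℝ)) ^ A) ∧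
          (∑' u : S,
            (∏ i, (1 + |((u : Fin n → ℤ) i : ℝ)| / Y) ^ (-M)) *
              Real.log (1 + ((Finset.univ.sup fun i => ((u : Fin n → ℤ) i).natAbs : ℕ) : ℝ)) ^ A)
            ≤ C * max 1 (Y ^ (κ + ε)) := by
  refine ⟨max (κ + ε) 0, fun M hM c A hc hA => ?_⟩
  have hκs : κ < max (κ + ε) 0 := lt_max_of_lt_left (by linarith)
  set T := ∑' j : ℕ, ((j : ℝ) + 1) ^ ⌈A⌉₊ * ((2 : ℝ) ^ (κ - max (κ + ε) 0)) ^ j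
  have hT : 0 < T :=
    (summable_succ_pow_mul_geometric _ (by positivity)
      (Real.rpow_lt_one_of_one_lt_of_neg one_lt_two (sub_neg.mpr hκs))).tsum_pos
      (fun j => by positivity) 0 (by simp)
  refine ⟨c * 2 ^ κ * T, by positivity, fun S hS Y hY => ?_⟩
  obtain ⟨hsum, hle⟩ := summable_weight_and_tsum_le hS hY hA (le_max_right _ _) hM hκs
  refine ⟨hsum, hle.trans ?_⟩
  rw [mul_right_comm]
  exact mul_le_mul_of_nonneg_left (max_one_rpow_max_le Y _) (by positivity)

theorem statement7 (n : ℕ) (hn : 1 ≤ n) (κ ε : ℝ) (hκ1 : 1 ≤ κ) (hκn : κ ≤ n)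
    (hε : 0 < ε) :
    ∃ M₀ : ℝ, ∀ M : ℝ, M₀ ≤ M → ∀ c A : ℝ, 0 < c → 0 ≤ A → ∃ C : ℝ, 0 < C ∧
      ∀ S : Set (Fin n → ℤ),
        (∀ H : ℝ, 1 ≤ H →
          (Set.ncard {u ∈ S | ∀ i, |(u i : ℝ)| ≤ H} : ℝ) ≤ c * H ^ κ) →
        ∀ Y : ℝ, 0 < Y →
          Summable (fun u : S =>
            (∏ i, (1 + |((u : Fin n → ℤ) i : ℝ)| / Y) ^ (-M)) *
              Real.log (1 + ((Finset.univ.sup fun i => ((u : Fin n → ℤ) i).natAbs : ℕ) : ℝ)) ^ A) ∧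
          (∑' u : S,
            (∏ i, (1 + |((u : Fin n → ℤ) i : ℝ)| / Y) ^ (-M)) *
              Real.log (1 + ((Finset.univ.sup fun i => ((u : Fin n → ℤ) i).natAbs : ℕ) : ℝ)) ^ A)
            ≤ C * max 1 (Y ^ (κ + ε)) :=
  statement7_general n κ ε hε
end
end

section
/- Let n ≥ 2 and let F ∈ ℤ[Y,X₁,…,Xₙ] be an absolutely irreducible polynomial (irreducible in ℚ̄[Y,X₁,…,Xₙ]) that is monic in Y with deg_Y F ≥ 2, and let L_F := ℚ(X₁,…,Xₙ)[Y]/(F). Then F is a strongly n-genuine polynomial if and only if for every j ∈ {1,…,n}, every element of L_F that is algebraic over the subfield ℚ((X_i)_{i≠j}) already lies in ℚ((X_i)_{i≠j}). -/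
open Polynomial

noncomputable section

/-
Write `K = ℚ(X₁,…,Xₙ)` and `Eⱼ = ℚ((Xᵢ)_{i≠j})`. Since `Xⱼ` is transcendental over `Eⱼ` and
`K = Eⱼ(Xⱼ)`, the field `Eⱼ` is algebraically closed in `K`. Hence the minimal polynomial over `K`
of any `z ∈ L_F` algebraic over `Eⱼ` has its coefficients in `Eⱼ`; clearing denominators turns it
into some `G ∈ ℤ[Y,X]` not involving `Xⱼ` with `K(z) ≅ K[Y]/(G)`. So if `z ∉ K`, the intermediate
field `K(z)` is not `n`-genuine, and if `z ∈ K` then `z ∈ Eⱼ`. Conversely, if some presentation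
`G` of an intermediate field `M' ≠ K` omits `Xᵢ`, its root is algebraic over `Eᵢ`, hence lies in
`Eᵢ ⊆ K`, forcing `M' = K`.
-/

open IntermediateField in
theorem IntermediateField.mem_bot_of_isAlgebraic_of_transcendental {E K : Type*} [Field E]
    [Field K] [Algebra E K] {x : K} (hx : Transcendental E x) (htop : E⟮x⟯ = ⊤) {w : K}
    (hw : IsAlgebraic E w) : w ∈ (⊥ : IntermediateField E K) := by
  set e := RatFunc.algEquivOfTranscendental x hx
  set w' : E⟮x⟯ := ⟨w, htop ▸ mem_top⟩
  have hf : IsAlgebraic E (e.symm w') :=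
    ((isAlgebraic_algHom_iff (val _) Subtype.val_injective).mp hw).algHom e.symm.toAlgHom
  obtain ⟨c, hc⟩ : ∃ c, e.symm w' = RatFunc.C c := by
    by_contra h
    exact RatFunc.transcendental_of_ne_C _ h hf
  have hw' : w' = e (RatFunc.C c) := by rw [← hc, AlgEquiv.apply_symm_apply]
  rw [← RatFunc.algebraMap_eq_C, AlgEquiv.commutes] at hw'
  exact mem_bot.mpr ⟨c, (congrArg Subtype.val hw').symm⟩

theorem minpoly.coeff_mem_range_of_isAlgebraic {E K L : Type*} [Field E] [Field K] [Field L]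
    [Algebra E K] [Algebra K L] [Algebra E L] [IsScalarTower E K L]
    (hE : ∀ w : K, IsAlgebraic E w → w ∈ Set.range (algebraMap E K))
    {z : L} (hz : IsAlgebraic E z) (k : ℕ) :
    (minpoly K z).coeff k ∈ Set.range (algebraMap E K) := by
  have hzK : IsIntegral K z := (hz.extendScalars (algebraMap E K).injective).isIntegral
  obtain ⟨p, hp, hpz⟩ := hz
  have hdvd : minpoly K z ∣ (p * C p.leadingCoeff⁻¹).map (algebraMap E K) :=
    minpoly.dvd K z (by simp [Polynomial.map_mul, hpz])
  obtain ⟨t, ht⟩ := (Polynomial.lifts_iff_coeff_lifts _).mp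
    (integralClosure.mem_lifts_of_monic_of_dvd_map K (Polynomial.monic_mul_leadingCoeff_inv hp)
      (minpoly.monic hzK) hdvd) k
  exact hE _ (ht ▸ t.2.isAlgebraic)

theorem IntermediateField.eq_bot_of_algEquiv_adjoinRoot {K M : Type*} [Field K] [Field M]
    [Algebra K M] {M' : IntermediateField K M} {f : K[X]} (hf : Irreducible f)
    (g : AdjoinRoot f ≃ₐ[K] M') {r : K} (hr : f.IsRoot r) : M' = ⊥ := by
  have hdeg : f.natDegree = 1 :=
    natDegree_eq_of_degree_eq_some (degree_eq_one_of_irreducible_of_root hf hr)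
  rw [← IntermediateField.finrank_eq_one_iff, ← g.toLinearEquiv.finrank_eq,
    (AdjoinRoot.powerBasis hf.ne_zero).finrank, AdjoinRoot.powerBasis_dim, hdeg]

theorem IntermediateField.toSubfield_adjoin_rat {K : Type*} [Field K] [Algebra ℚ K] (S : Set K) :
    (adjoin ℚ S).toSubfield = Subfield.closure S := by
  refine le_antisymm ?_ (Subfield.closure_le.mpr (subset_adjoin ℚ S))
  rw [adjoin_toSubfield]
  refine Subfield.closure_le.mpr (Set.union_subset ?_ Subfield.subset_closure)
  rintro _ ⟨q, rfl⟩
  rw [eq_ratCast]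
  exact SubfieldClass.ratCast_mem _ q

theorem Subring.exists_ne_zero_mul_mem_of_forall_eq_div {K : Type*} [Field K] (R : Subring K)
    (s : Finset K) (hs : ∀ r ∈ s, ∃ y ∈ R, ∃ z ∈ R, y / z = r) :
    ∃ u ∈ R, u ≠ 0 ∧ ∀ r ∈ s, u * r ∈ R := by
  classical
  induction s using Finset.induction_on with
  | empty => exact ⟨1, R.one_mem, one_ne_zero, by simp⟩
  | insert a s _ ih =>
    obtain ⟨u, hu, hu0, hus⟩ := ih fun r hr => hs r (Finset.mem_insert_of_mem hr)
    obtain ⟨y, hy, z, hz, rfl⟩ := hs a (Finset.mem_insert_self a s)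
    rcases eq_or_ne z 0 with rfl | hz0
    · exact ⟨u, hu, hu0, by simpa using hus⟩
    refine ⟨z * u, R.mul_mem hz hu, mul_ne_zero hz0 hu0, ?_⟩
    rintro r hr
    rcases Finset.mem_insert.mp hr with rfl | hr
    · rw [mul_comm z, mul_assoc, mul_div_cancel₀ _ hz0]
      exact R.mul_mem hu hy
    · rw [mul_assoc]
      exact R.mul_mem hz (hus r hr)

theorem MvPolynomial.mem_supported_compl_singleton_iff {σ R : Type*} [CommSemiring R]
    {p : MvPolynomial σ R} {j : σ} : p ∈ supported R {j}ᶜ ↔ p.degreeOf j = 0 := by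
  rw [mem_supported, Set.subset_compl_singleton_iff, Finset.mem_coe,
    mem_vars_iff_degreeOf_ne_zero, not_not]

theorem degX_eq_zero_iff {n : ℕ} {R : Type*} [CommSemiring R]
    {G : Polynomial (MvPolynomial (Fin n) R)} {j : Fin n} :
    degX G j = 0 ↔ ∀ k, G.coeff k ∈ MvPolynomial.supported R {j}ᶜ := by
  simp only [MvPolynomial.mem_supported_compl_singleton_iff]
  rw [degX, ← bot_eq_zero', Finset.sup_eq_bot_iff]
  refine ⟨fun h k => ?_, fun h k _ => h k⟩
  by_cases hk : k ∈ G.support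
  · exact h k hk
  · simp [Polynomial.notMem_support_iff.mp hk]

namespace RF

variable {n : ℕ}

def var (n : ℕ) (i : Fin n) : RF n := algebraMap (MvPolynomial (Fin n) ℚ) (RF n) (MvPolynomial.X i)

/-- `ℚ((Xᵢ)_{i≠j})`. -/
abbrev coordField (j : Fin n) : IntermediateField ℚ (RF n) :=
  IntermediateField.adjoin ℚ (var n '' {j}ᶜ)

theorem mem_adjoin_var_iff {T : Set (Fin n)} {ρ : RF n} :
    ρ ∈ Algebra.adjoin ℚ (var n '' T) ↔
      ∃ a ∈ MvPolynomial.supported ℚ T, algebraMap _ (RF n) a = ρ := by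
  have hvar : var n = IsScalarTower.toAlgHom ℚ (MvPolynomial (Fin n) ℚ) (RF n) ∘
      MvPolynomial.X := rfl
  rw [hvar, Set.image_comp, Algebra.adjoin_image, Subalgebra.mem_map,
    ← MvPolynomial.supported_eq_adjoin_X]
  rfl

theorem adjoin_var_eq_top : IntermediateField.adjoin ℚ (Set.range (var n)) = ⊤ := by
  refine eq_top_iff.mpr fun w _ => ?_
  obtain ⟨a, b, -, rfl⟩ := IsFractionRing.div_surjective (A := MvPolynomial (Fin n) ℚ) w
  have hpoly (c) : algebraMap _ (RF n) c ∈ IntermediateField.adjoin ℚ (Set.range (var n)) :=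
    IntermediateField.algebra_adjoin_le_adjoin ℚ _ <| by
      rw [← Set.image_univ]
      exact mem_adjoin_var_iff.mpr ⟨c, by simp, rfl⟩
  exact div_mem (hpoly a) (hpoly b)

theorem algebraicIndependent_var : AlgebraicIndependent ℚ (var n) :=
  (MvPolynomial.algebraicIndependent_X (Fin n) ℚ).map'
    (f := IsScalarTower.toAlgHom ℚ (MvPolynomial (Fin n) ℚ) (RF n))
    (IsFractionRing.injective _ _)

theorem transcendental_var (j : Fin n) : Transcendental (coordField j) (var n j) :=
  IntermediateField.transcendental_adjoin_iff.mpr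
    (algebraicIndependent_var.transcendental_adjoin (Set.notMem_compl_iff.mpr rfl))

theorem adjoin_coordField_var_eq_top (j : Fin n) :
    IntermediateField.adjoin (coordField j) {var n j} = ⊤ := by
  have hS : var n '' {j}ᶜ ∪ {var n j} = Set.range (var n) := by
    rw [← Set.image_singleton, ← Set.image_union, Set.compl_union_self, Set.image_univ]
  have h := IntermediateField.adjoin_adjoin_left ℚ (var n '' {j}ᶜ) {var n j}
  rw [hS, adjoin_var_eq_top, ← IntermediateField.restrictScalars_top (F := coordField j)] at h
  exact IntermediateField.restrictScalars_injective ℚ h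

theorem mem_coordField_of_isAlgebraic {j : Fin n} {w : RF n}
    (hw : IsAlgebraic (coordField j) w) : w ∈ coordField j := by
  obtain ⟨r, rfl⟩ := IntermediateField.mem_bot.mp
    (IntermediateField.mem_bot_of_isAlgebraic_of_transcendental (transcendental_var j)
      (adjoin_coordField_var_eq_top j) hw)
  exact r.2

theorem mem_coordField_iff {j : Fin n} {r : RF n} :
    r ∈ coordField j ↔ ∃ a b : MvPolynomial (Fin n) ℚ, a.degreeOf j = 0 ∧ b.degreeOf j = 0 ∧
      algebraMap _ (RF n) b ≠ 0 ∧ r * algebraMap _ (RF n) b = algebraMap _ (RF n) a := by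
  simp only [coordField, IntermediateField.mem_adjoin_iff_div, mem_adjoin_var_iff,
    ← MvPolynomial.mem_supported_compl_singleton_iff]
  constructor
  · rintro ⟨_, ⟨a, ha, rfl⟩, _, ⟨b, hb, rfl⟩, rfl⟩
    by_cases hb0 : algebraMap _ (RF n) b = 0
    · exact ⟨0, 1, zero_mem _, one_mem _, by simp, by simp [hb0]⟩
    · exact ⟨a, b, ha, hb, hb0, div_mul_cancel₀ _ hb0⟩
  · rintro ⟨a, b, ha, hb, hb0, h⟩
    exact ⟨_, ⟨a, ha, rfl⟩, _, ⟨b, hb, rfl⟩, eq_div_of_mul_eq hb0 h⟩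

theorem exists_supported_of_mem_subringClosure {T : Set (Fin n)} {r : RF n}
    (hr : r ∈ Subring.closure (var n '' T)) : ∃ g ∈ MvPolynomial.supported ℤ T,
      algebraMap _ (RF n) (MvPolynomial.map (Int.castRingHom ℚ) g) = r := by
  set ψ := (algebraMap (MvPolynomial (Fin n) ℚ) (RF n)).comp
    (MvPolynomial.map (Int.castRingHom ℚ))
  have hT : var n '' T = ψ '' (MvPolynomial.X '' T) := by
    rw [← Set.image_comp]
    congr 1
    funext i
    simp [ψ, var]
  rw [hT, ← RingHom.map_closure] at hr
  obtain ⟨g, hg, rfl⟩ := Subring.mem_map.mp hr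
  refine ⟨g, Subring.closure_le (t := (MvPolynomial.supported ℤ T).toSubring).mpr ?_ hg, rfl⟩
  rintro _ ⟨i, hi, rfl⟩
  exact MvPolynomial.X_mem_supported.mpr hi

/-- Denominators are cleared in the ring generated over `ℤ` (not `ℚ`) by the `Xᵢ`, `i ≠ j`, so
that the resulting `G` has integer coefficients. -/
theorem exists_degX_eq_zero_of_coeff_mem {j : Fin n} {ν : Polynomial (RF n)}
    (hν : ∀ k, ν.coeff k ∈ coordField j) :
    ∃ G, degX G j = 0 ∧ ∃ u : RF n, u ≠ 0 ∧ toFrac G = C u * ν := by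
  set A := MvPolynomial.supported ℤ ({j}ᶜ : Set (Fin n))
  set ψ : A →+* RF n := ((algebraMap _ (RF n)).comp
    (MvPolynomial.map (Int.castRingHom ℚ))).comp A.val.toRingHom
  have hψ {r : RF n} (hr : r ∈ Subring.closure (var n '' {j}ᶜ)) : r ∈ ψ.range := by
    obtain ⟨g, hg, rfl⟩ := exists_supported_of_mem_subringClosure hr
    exact ⟨⟨g, hg⟩, rfl⟩
  obtain ⟨u, hu, hu0, hmul⟩ := ψ.range.exists_ne_zero_mul_mem_of_forall_eq_div ν.coeffs
    fun r hr => by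
      obtain ⟨k, -, rfl⟩ := Polynomial.mem_coeffs_iff.mp hr
      have hk := hν k
      rw [← IntermediateField.mem_toSubfield, IntermediateField.toSubfield_adjoin_rat] at hk
      obtain ⟨y, hy, z, hz, h⟩ := Subfield.mem_closure_iff.mp hk
      exact ⟨y, hψ hy, z, hψ hz, h⟩
  obtain ⟨G₀, hG₀⟩ : C u * ν ∈ Polynomial.lifts ψ := by
    refine (Polynomial.lifts_iff_coeff_lifts _).mpr fun k => ?_
    rw [Polynomial.coeff_C_mul]
    rcases eq_or_ne (ν.coeff k) 0 with h | h
    · rw [h, mul_zero]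
      exact zero_mem ψ.range
    · exact hmul _ (Polynomial.coeff_mem_coeffs h)
  refine ⟨G₀.map A.val.toRingHom, degX_eq_zero_iff.mpr fun k => ?_, u, hu0, ?_⟩
  · rw [Polynomial.coeff_map]
    exact (G₀.coeff k).2
  · rw [← hG₀, toFrac, toFracQ, toQ, Polynomial.map_map, Polynomial.map_map]
    rfl

theorem coeff_toFrac_mem_coordField {j : Fin n} {G : Polynomial (MvPolynomial (Fin n) ℤ)}
    (hG : degX G j = 0) (k : ℕ) : (toFrac G).coeff k ∈ coordField j := by
  rw [toFrac, toFracQ, toQ, coeff_map, coeff_map]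
  refine IntermediateField.algebra_adjoin_le_adjoin ℚ _ (mem_adjoin_var_iff.mpr ⟨_, ?_, rfl⟩)
  exact MvPolynomial.mem_supported.mpr ((Finset.coe_subset.mpr (MvPolynomial.vars_map _ _)).trans
    (MvPolynomial.mem_supported.mp (degX_eq_zero_iff.mp hG k)))

end RF

theorem irreducible_toFrac {n : ℕ} {F : Polynomial (MvPolynomial (Fin n) ℤ)} (habs : AbsIrred F)
    (hmon : F.Monic) : Irreducible (toFrac F) := by
  have hmonQ : (toQ F).Monic := hmon.map _
  have hirrQ : Irreducible (toQ F) := by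
    refine hmonQ.irreducible_of_irreducible_map
      (MvPolynomial.map (algebraMap ℚ (AlgebraicClosure ℚ))) _ ?_
    rw [AbsIrred] at habs
    convert habs using 1
    rw [toQ, Polynomial.map_map]
    congr 1
    apply MvPolynomial.ringHom_ext <;> simp
  exact hmonQ.irreducible_iff_irreducible_map_fraction_map.mp hirrQ

section AdjoinRoot

variable {n : ℕ} {F : Polynomial (MvPolynomial (Fin n) ℤ)} [Fact (Irreducible (toFrac F))]

theorem coordMem_iff {j : Fin n} {z : AdjoinRoot (toFrac F)} :
    CoordMem j F z ↔ z ∈ Set.range (algebraMap (RF.coordField j) (AdjoinRoot (toFrac F))) := by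
  simp only [CoordMem, structMap, RingHom.comp_apply, Set.mem_range, Subtype.exists,
    IsScalarTower.algebraMap_apply (RF.coordField j) (RF n) (AdjoinRoot (toFrac F)),
    IntermediateField.algebraMap_apply, RF.mem_coordField_iff]
  constructor
  · rintro ⟨a, b, ha, hb, hb0, hz⟩
    have hb0' : algebraMap _ (RF n) b ≠ 0 := fun h => hb0 (by rw [h, map_zero])
    refine ⟨_, ⟨a, b, ha, hb, hb0', div_mul_cancel₀ _ hb0'⟩, ?_⟩
    rw [map_div₀, ← hz, mul_div_cancel_right₀ _ hb0]
  · rintro ⟨r, ⟨a, b, ha, hb, hb0, hr⟩, rfl⟩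
    exact ⟨a, b, ha, hb, (_root_.map_ne_zero _).mpr hb0, by rw [← map_mul, hr]⟩

theorem algOverCoord_iff {j : Fin n} {z : AdjoinRoot (toFrac F)} :
    AlgOverCoord j F z ↔ IsAlgebraic (RF.coordField j) z := by
  simp only [AlgOverCoord, coordMem_iff, ← Polynomial.lifts_iff_coeff_lifts, Polynomial.mem_lifts]
  constructor
  · rintro ⟨_, hP, ⟨p, rfl⟩, hz⟩
    exact ⟨p, fun h => hP (by rw [h, Polynomial.map_zero]), by rwa [aeval_def, ← eval_map]⟩
  · rintro ⟨p, hp, hz⟩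
    refine ⟨p.map _, (Polynomial.map_ne_zero_iff
      (algebraMap (RF.coordField j) (AdjoinRoot (toFrac F))).injective).mpr hp, ⟨p, rfl⟩, ?_⟩
    rwa [eval_map, ← aeval_def]

end AdjoinRoot

theorem stronglyGenuineExtOfQ_of_forall_isAlgebraic {n : ℕ}
    {F : Polynomial (MvPolynomial (Fin n) ℤ)} [Fact (Irreducible (toFrac F))]
    (h : ∀ (j : Fin n) (z : AdjoinRoot (toFrac F)), IsAlgebraic (RF.coordField j) z →
      z ∈ Set.range (algebraMap (RF.coordField j) (AdjoinRoot (toFrac F)))) :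
    StronglyGenuineExtOfQ (toQ F) := by
  intro M _ _ he M' hM' G hG ⟨g⟩
  obtain ⟨e⟩ : Nonempty (AdjoinRoot (toFrac F) ≃ₐ[RF n] M) := he
  refine ⟨hG.natDegree_pos.trans_le (natDegree_map_le.trans natDegree_map_le),
    fun i => Nat.pos_of_ne_zero fun hGi => hM' ?_⟩
  set w : AdjoinRoot (toFrac F) := e.symm (g (AdjoinRoot.root _))
  have hw : aeval w (toFrac G) = 0 := by
    have hw' : w = (e.symm.toAlgHom.comp (M'.val.comp g.toAlgHom)) (AdjoinRoot.root _) := rfl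
    rw [hw', aeval_algHom_apply, AdjoinRoot.aeval_eq, AdjoinRoot.mk_self, map_zero]
  have hlifts : toFrac G ∈ Polynomial.lifts (algebraMap (RF.coordField i) (RF n)) :=
    (Polynomial.lifts_iff_coeff_lifts _).mpr fun k =>
      ⟨⟨_, RF.coeff_toFrac_mem_coordField hGi k⟩, rfl⟩
  obtain ⟨p, hp⟩ := (Polynomial.mem_lifts _).mp hlifts
  obtain ⟨⟨r, _⟩, hr⟩ := h i w ⟨p, fun hp0 => hG.ne_zero (by rw [← hp, hp0, Polynomial.map_zero]),
    by rw [← aeval_map_algebraMap (RF n), hp, hw]⟩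
  refine IntermediateField.eq_bot_of_algEquiv_adjoinRoot hG g (r := r) ?_
  apply (algebraMap (RF n) (AdjoinRoot (toFrac F))).injective
  have hrw : algebraMap (RF n) _ r = w := hr
  rw [map_zero, ← aeval_algebraMap_apply_eq_algebraMap_eval, hrw, hw]

theorem mem_range_of_isAlgebraic_of_stronglyGenuineExtOfQ {n : ℕ}
    {F : Polynomial (MvPolynomial (Fin n) ℤ)} [Fact (Irreducible (toFrac F))]
    (hF : StronglyGenuineExtOfQ (toQ F)) (j : Fin n) (z : AdjoinRoot (toFrac F))
    (hz : IsAlgebraic (RF.coordField j) z) :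
    z ∈ Set.range (algebraMap (RF.coordField j) (AdjoinRoot (toFrac F))) := by
  have hν (k : ℕ) : (minpoly (RF n) z).coeff k ∈ RF.coordField j := by
    obtain ⟨r, hr⟩ := minpoly.coeff_mem_range_of_isAlgebraic
      (fun w hw => ⟨⟨w, RF.mem_coordField_of_isAlgebraic hw⟩, rfl⟩) hz k
    exact hr ▸ r.2
  by_cases hbot : IntermediateField.adjoin (RF n) {z} = ⊥
  · obtain ⟨r, rfl⟩ := IntermediateField.mem_bot.mp
      (IntermediateField.adjoin_simple_eq_bot_iff.mp hbot)
    have hr := hν 0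
    rw [minpoly.eq_X_sub_C, coeff_sub, coeff_X_zero, coeff_C_zero, zero_sub, neg_mem_iff] at hr
    exact ⟨⟨r, hr⟩, rfl⟩
  · exfalso
    have hzK : IsIntegral (RF n) z :=
      (hz.extendScalars (algebraMap (RF.coordField j) (RF n)).injective).isIntegral
    obtain ⟨G, hGj, u, hu, hG⟩ := RF.exists_degX_eq_zero_of_coeff_mem hν
    have hassoc : Associated (toFrac G) (minpoly (RF n) z) :=
      hG ▸ associated_unit_mul_left _ _ (isUnit_C.mpr hu.isUnit)
    have hGirr : Irreducible (toFrac G) := hassoc.symm.irreducible (minpoly.irreducible hzK)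
    have hiso : AdjoinRoot (toFrac G) ≃ₐ[RF n] IntermediateField.adjoin (RF n) {z} :=
      (Ideal.quotientEquivAlgOfEq (RF n) (Ideal.span_singleton_eq_span_singleton.mpr hassoc)).trans
        (IntermediateField.adjoinRootEquivAdjoin (RF n) hzK)
    have hpos := (hF _ ⟨AlgEquiv.refl⟩ _ hbot G hGirr ⟨hiso⟩).2 j
    omega

theorem statement9_general (n : ℕ) (F : Polynomial (MvPolynomial (Fin n) ℤ))
    (habs : AbsIrred F) (hmon : F.Monic) :
    IsStronglyGenuinePoly F ↔
      ∀ j : Fin n, ∀ z : AdjoinRoot (toFrac F),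
        AlgOverCoord j F z → CoordMem j F z := by
  have : Fact (Irreducible (toFrac F)) := ⟨irreducible_toFrac habs hmon⟩
  simp only [algOverCoord_iff, coordMem_iff]
  exact ⟨fun h => mem_range_of_isAlgebraic_of_stronglyGenuineExtOfQ h.2,
    fun h => ⟨habs, stronglyGenuineExtOfQ_of_forall_isAlgebraic h⟩⟩

theorem statement9 (n : ℕ) (hn : 2 ≤ n) (F : Polynomial (MvPolynomial (Fin n) ℤ))
    (habs : AbsIrred F) (hmon : F.Monic) (hdeg : 2 ≤ F.natDegree) :
    IsStronglyGenuinePoly F ↔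
      ∀ j : Fin n, ∀ z : AdjoinRoot (toFrac F),
        AlgOverCoord j F z → CoordMem j F z :=
  statement9_general n F habs hmon
end
end

section
/- Let A be an m₁ × m₂ matrix with integer entries, of rank s with s < min{m₁,m₂}, and suppose every entry a_{ij} satisfies |a_{ij}| ≤ M for a real number M ≥ 1. Then there exists a nonzero integer vector b ∈ ℤ^{m₂} with A·b = 0 and max_i |b_i| ≤ C(s)·M^{s}, where C(s) is a constant depending only on s. -/
open Polynomial

noncomputable section

/-!
Pick `s` rows of `A` spanning its row space over `ℚ`, and in them an `s × s` minor `D` with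
`det D ≠ 0`, on columns `c`; since `s < m₂` there is a further column `j₀`. Cramer's rule for
`D w = -det D • A_{j₀}` gives an integer vector supported on `c ∪ {j₀}` with entry `det D` at
`j₀`, which kills the chosen rows and hence all of `A`. Each of its entries is an `s × s`
determinant with entries bounded by `M`, hence at most `s! M^s` by the Leibniz formula.
-/

open Matrix Function

theorem exists_linearIndependent_comp_fin_span_eq {K V ι : Type*} [DivisionRing K]
    [AddCommGroup V] [Module K V] [Finite ι] {s : ℕ} (v : ι → V)
    (h : Module.finrank K (Submodule.span K (Set.range v)) = s) :
    ∃ c : Fin s → ι, LinearIndependent K (v ∘ c) ∧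
      Submodule.span K (Set.range (v ∘ c)) = Submodule.span K (Set.range v) := by
  obtain ⟨κ, a, ha, hspan, hli⟩ := exists_linearIndependent' K v
  have : Fintype κ := have := Finite.of_injective a ha; Fintype.ofFinite κ
  obtain ⟨e⟩ : Nonempty (Fin s ≃ κ) :=
    ⟨(Fintype.equivFinOfCardEq (by rw [← h, ← hspan, finrank_span_eq_card hli])).symm⟩
  refine ⟨a ∘ e, hli.comp e e.injective, ?_⟩
  rw [← hspan, ← Function.comp_assoc, Set.range_comp, e.range_eq_univ, Set.image_univ]

namespace Matrix

theorem mulVec_eq_zero_of_span_row_eq {R ι m n : Type*} [CommRing R] [Fintype n]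
    (A : Matrix m n R) (r : ι → m)
    (hr : Submodule.span R (Set.range (A.row ∘ r)) = Submodule.span R (Set.range A.row))
    {v : n → R} (hv : A.submatrix r id *ᵥ v = 0) : A *ᵥ v = 0 := by
  have hle : Submodule.span R (Set.range A.row) ≤
      LinearMap.ker ((dotProductBilin R R).flip v) := by
    rw [← hr, Submodule.span_le]
    rintro _ ⟨k, rfl⟩
    exact congrFun hv k
  funext i
  exact hle (Submodule.subset_span ⟨i, rfl⟩)

theorem map_mulVec_comp_eq_zero_iff {R S m n : Type*} [CommRing R] [CommRing S] [Fintype n]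
    {f : R →+* S} (hf : Injective f) (A : Matrix m n R) (v : n → R) :
    A.map f *ᵥ (f ∘ v) = 0 ↔ A *ᵥ v = 0 := by
  simp only [funext_iff, ← RingHom.map_mulVec, Pi.zero_apply, map_eq_zero_iff f hf]

theorem mulVec_extend_zero {R ι m n : Type*} [CommRing R] [Fintype ι] [Fintype n]
    (A : Matrix m n R) {c : ι → n} (hc : Injective c) (w : ι → R) :
    A *ᵥ extend c w 0 = A.submatrix id c *ᵥ w := by
  funext i
  refine (Fintype.sum_of_injective c hc _ _ (fun j hj => ?_) fun l => ?_).symm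
  · rw [extend_apply' _ _ _ hj, Pi.zero_apply, mul_zero]
  · rw [hc.extend_apply]
    rfl

theorem abs_map_det_le {R S ι : Type*} [CommRing R] [CommRing S] [LinearOrder S]
    [IsStrictOrderedRing S] [Fintype ι] [DecidableEq ι] (f : R →+* S) {D : Matrix ι ι R}
    {x : S} (hD : ∀ i j, |f (D i j)| ≤ x) :
    |f D.det| ≤ (Fintype.card ι).factorial * x ^ Fintype.card ι := by
  rw [RingHom.map_det, ← nsmul_eq_mul]
  exact det_le (abv := AbsoluteValue.abs) hD

theorem exists_isUnit_det_submatrix_of_rank_eq {K m n : Type*} [Field K] [Fintype m]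
    [Fintype n] {s : ℕ} (A : Matrix m n K) (h : A.rank = s) :
    ∃ (r : Fin s → m) (c : Fin s → n), Injective c ∧
      Submodule.span K (Set.range (A.row ∘ r)) = Submodule.span K (Set.range A.row) ∧
      IsUnit (A.submatrix r c).det := by
  obtain ⟨r, hr, hspan⟩ :=
    exists_linearIndependent_comp_fin_span_eq A.row (A.rank_eq_finrank_span_row ▸ h)
  set B := A.submatrix r id
  have hB : B.rank = s := by simpa using LinearIndependent.rank_matrix (M := B) hr
  obtain ⟨c, hc, -⟩ :=
    exists_linearIndependent_comp_fin_span_eq B.col (B.rank_eq_finrank_span_cols ▸ hB)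
  refine ⟨r, c, hc.injective.of_comp, hspan, ?_⟩
  rw [← isUnit_iff_isUnit_det, ← linearIndependent_cols_iff_isUnit]
  exact hc

end Matrix

section CramerKernelVector

variable {R : Type*} [CommRing R] {ι n : Type*} [Fintype ι] [DecidableEq ι] [DecidableEq n]

/-- The solution `w` of `B_c w = -det(B_c) • B_{j₀}` given by Cramer's rule, placed on the
columns `c`, with `det(B_c)` in column `j₀`. -/
def cramerKernelVector (B : Matrix ι n R) (c : ι → n) (j₀ : n) : n → R :=
  Pi.single j₀ (B.submatrix id c).det + extend c ((B.submatrix id c).cramer (-B.col j₀)) 0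

variable {B : Matrix ι n R} {c : ι → n} {j₀ : n}

theorem mulVec_cramerKernelVector [Fintype n] (hc : Injective c) :
    B *ᵥ cramerKernelVector B c j₀ = 0 := by
  rw [cramerKernelVector, mulVec_add, mulVec_single, B.mulVec_extend_zero hc, mulVec_cramer]
  funext i
  simp [mul_comm]

theorem cramerKernelVector_self (hj₀ : j₀ ∉ Set.range c) :
    cramerKernelVector B c j₀ j₀ = (B.submatrix id c).det := by
  simp [cramerKernelVector, extend_apply' _ _ _ hj₀]

theorem abs_map_cramerKernelVector_le {S : Type*} [CommRing S] [LinearOrder S]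
    [IsStrictOrderedRing S] (f : R →+* S) (hc : Injective c) (hj₀ : j₀ ∉ Set.range c) {x : S}
    (hx : 0 ≤ x) (hB : ∀ i j, |f (B i j)| ≤ x) (j : n) :
    |f (cramerKernelVector B c j₀ j)| ≤ (Fintype.card ι).factorial * x ^ Fintype.card ι := by
  by_cases hj : j = j₀
  · subst hj
    rw [cramerKernelVector_self hj₀]
    exact abs_map_det_le f fun _ _ => hB _ _
  obtain ⟨l, rfl⟩ | hjc := em (j ∈ Set.range c)
  · rw [cramerKernelVector, Pi.add_apply, Pi.single_eq_of_ne hj, zero_add, hc.extend_apply,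
      cramer_apply]
    refine abs_map_det_le f fun i k => ?_
    rw [updateCol_apply]
    split_ifs
    · simpa using hB i j₀
    · exact hB _ _
  · rw [cramerKernelVector, Pi.add_apply, Pi.single_eq_of_ne hj, extend_apply' _ _ _ hjc]
    simp only [Pi.zero_apply, add_zero, map_zero, abs_zero]
    positivity

end CramerKernelVector
theorem statement16 (s : ℕ) :
    ∃ C : ℝ, 0 < C ∧
      ∀ (m₁ m₂ : ℕ) (A : Matrix (Fin m₁) (Fin m₂) ℤ) (M : ℝ),
        1 ≤ M → (A.map (Int.castRingHom ℚ)).rank = s → s < m₁ → s < m₂ →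
        (∀ i j, |(A i j : ℝ)| ≤ M) →
        ∃ b : Fin m₂ → ℤ, b ≠ 0 ∧ A.mulVec b = 0 ∧
          ∀ i, |(b i : ℝ)| ≤ C * M ^ s := by
  refine ⟨s.factorial, by positivity, fun m₁ m₂ A M hM hrank _ hs₂ hA => ?_⟩
  obtain ⟨r, c, hc, hspan, hdet⟩ := exists_isUnit_det_submatrix_of_rank_eq _ hrank
  obtain ⟨j₀, hj₀⟩ : ∃ j₀, j₀ ∉ Set.range c := by
    by_contra! h
    exact hs₂.not_ge (by simpa using Fintype.card_le_of_surjective c h)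
  have hcast : Injective (Int.castRingHom ℚ) := Int.cast_injective
  refine ⟨cramerKernelVector (A.submatrix r id) c j₀, fun h0 => ?_, ?_, fun j => ?_⟩
  · have hzero : (A.submatrix r c).det = 0 := by
      simpa [cramerKernelVector_self hj₀] using congrFun h0 j₀
    rw [submatrix_map, ← RingHom.mapMatrix_apply, ← RingHom.map_det, hzero, map_zero] at hdet
    exact not_isUnit_zero hdet
  · rw [← map_mulVec_comp_eq_zero_iff hcast]
    refine mulVec_eq_zero_of_span_row_eq _ r hspan ?_
    rw [submatrix_map, map_mulVec_comp_eq_zero_iff hcast]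
    exact mulVec_cramerKernelVector hc
  · simpa only [Fintype.card_fin, eq_intCast] using
      abs_map_cramerKernelVector_le (B := A.submatrix r id) (Int.castRingHom ℝ) hc hj₀
        (zero_le_one.trans hM) (fun _ _ => hA _ _) j
end
end
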